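/- Let D ⊊ ℝⁿ be a bounded domain with diameter d. For all x, y ∈ D: ζ_D(x,y) ≤ m_D(x,y), where ζ_D(x,y) = log(1 + d·|x−y| / min(η(x), η(y))) and m_D is the infimal path-length metric with density d/η(z). -/

import Mathlib

noncomputable def deltaD {n : ℕ} (D : Set (EuclideanSpace ℝ (Fin n)))
    (z : EuclideanSpace ℝ (Fin n)) : ℝ :=
  Metric.infDist z (frontier D)

noncomputable def etaD {n : ℕ} (D : Set (EuclideanSpace ℝ (Fin n)))
    (z : EuclideanSpace ℝ (Fin n)) : ℝ :=
  deltaD D z * (Metric.diam D - deltaD D z)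

noncomputable def zetaD {n : ℕ} (D : Set (EuclideanSpace ℝ (Fin n)))
    (x y : EuclideanSpace ℝ (Fin n)) : ℝ :=
  Real.log (1 + Metric.diam D * dist x y / min (etaD D x) (etaD D y))

noncomputable def zetaD' {n : ℕ} (D : Set (EuclideanSpace ℝ (Fin n)))
    (x y : EuclideanSpace ℝ (Fin n)) : ℝ :=
  (1 / 2) * Real.log ((1 + Metric.diam D * dist x y / etaD D x) *
    (1 + Metric.diam D * dist x y / etaD D y))

/-- The length of a C¹ path with respect to the density `diam D / η`. -/
noncomputable def mLength {n : ℕ} (D : Set (EuclideanSpace ℝ (Fin n)))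
    (γ : ℝ → EuclideanSpace ℝ (Fin n)) : ℝ :=
  ∫ t in (0:ℝ)..1, (Metric.diam D / etaD D (γ t)) * ‖deriv γ t‖

/-- The infimal path-length metric `m_D` with density `diam D / η(z)`. -/
noncomputable def mDist {n : ℕ} (D : Set (EuclideanSpace ℝ (Fin n)))
    (x y : EuclideanSpace ℝ (Fin n)) : ℝ :=
  sInf { L : ℝ | ∃ γ : ℝ → EuclideanSpace ℝ (Fin n),
    ContDiffOn ℝ 1 γ (Set.Icc 0 1) ∧ γ 0 = x ∧ γ 1 = y ∧
    (∀ t ∈ Set.Icc (0:ℝ) 1, γ t ∈ D) ∧ L = mLength D γ }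

/-!
Along a C¹ path `γ` from `x`, let `s t` be the Euclidean length of `γ` on `[0, t]`. Since
`δ` is 1-Lipschitz with `0 ≤ δ ≤ d / 2` on `D`, `η = δ (d - δ)` is `d`-Lipschitz, so
`η (γ t) ≤ η x + d * s t`. Hence the density `d ‖γ'‖ / η ∘ γ` dominates the derivative of
`log (η x + d * s t)`, and integrating gives `log (1 + d * s 1 / η x) ≤ mLength D γ`, with
`|x - y| ≤ s 1`. Running `γ` backwards gives the same bound with `η y`.
-/

open Set Metric MeasureTheory Bornology

section FrontierDistance

variable {E : Type*} [NormedAddCommGroup E] [NormedSpace ℝ E] {D : Set E} {z : E}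

theorem ball_infDist_frontier_subset (hD : IsOpen D) (hz : z ∈ D) :
    ball z (infDist z (frontier D)) ⊆ D := by
  rcases (infDist_nonneg (x := z) (s := frontier D)).eq_or_lt with h | h
  · simp [← h]
  refine (convex_ball z _).isPreconnected.subset_of_closure_inter_subset hD
    ⟨z, mem_ball_self h, hz⟩ ?_
  rintro p ⟨hpD, hpz⟩
  by_contra hp
  exact (mem_ball'.1 hpz).not_ge (infDist_le_dist_of_mem ⟨hpD, by rwa [hD.interior_eq]⟩)

theorem infDist_frontier_pos (hD : IsOpen D) (hD' : D ≠ univ) (hz : z ∈ D) :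
    0 < infDist z (frontier D) :=
  (isClosed_frontier.notMem_iff_infDist_pos (nonempty_frontier_iff.2 ⟨⟨z, hz⟩, hD'⟩)).1
    fun h => h.2 (by rwa [hD.interior_eq])

theorem two_mul_infDist_frontier_le_diam (hD : IsOpen D) (hbdd : IsBounded D) (hz : z ∈ D) :
    2 * infDist z (frontier D) ≤ diam D := by
  rcases subsingleton_or_nontrivial E with _ | _
  · have : D = univ := eq_univ_of_forall fun w => Subsingleton.elim z w ▸ hz
    simp [this, diam_nonneg]
  obtain ⟨v, hv⟩ := exists_norm_eq E zero_le_one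
  refine le_of_forall_lt_imp_le_of_dense fun a ha => ?_
  rcases lt_or_ge a 0 with ha0 | ha0
  · exact ha0.le.trans diam_nonneg
  have hmem : ∀ c : ℝ, |c| = a / 2 → z + c • v ∈ D := fun c hc =>
    ball_infDist_frontier_subset hD hz <| by
      rw [mem_ball, dist_eq_norm, add_sub_cancel_left, norm_smul, hv, Real.norm_eq_abs, hc]
      linarith
  calc a = dist (z + (a / 2) • v) (z + (-(a / 2)) • v) := by
        rw [dist_eq_norm, add_sub_add_left_eq_sub, ← sub_smul, norm_smul, hv, Real.norm_eq_abs]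
        rw [abs_of_nonneg (by linarith)]
        ring
    _ ≤ diam D := dist_le_diam_of_mem hbdd (hmem _ (abs_of_nonneg (by linarith)))
        (hmem _ (by rw [abs_neg, abs_of_nonneg (by linarith)]))

end FrontierDistance

theorem mul_sub_le_mul_sub_add_mul_abs_sub {p q d : ℝ} (hp : 0 ≤ p) (hq : 0 ≤ q)
    (hpd : p ≤ d) (hqd : q ≤ d) : p * (d - p) ≤ q * (d - q) + d * |p - q| := by
  rcases abs_cases (p - q) with ⟨h, _⟩ | ⟨h, _⟩ <;> rw [h] <;> nlinarith

section Eta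

variable {n : ℕ} {D : Set (EuclideanSpace ℝ (Fin n))} {z w : EuclideanSpace ℝ (Fin n)}

theorem continuous_etaD (D : Set (EuclideanSpace ℝ (Fin n))) : Continuous (etaD D) :=
  (continuous_infDist_pt _).mul (continuous_const.sub (continuous_infDist_pt _))

theorem etaD_pos (hD : IsOpen D) (hD' : D ≠ univ) (hbdd : IsBounded D) (hz : z ∈ D) :
    0 < etaD D z := by
  have h₁ := infDist_frontier_pos hD hD' hz
  have h₂ := two_mul_infDist_frontier_le_diam hD hbdd hz
  exact mul_pos h₁ (by unfold deltaD; linarith)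

theorem etaD_le_etaD_add_diam_mul_dist (hD : IsOpen D) (hbdd : IsBounded D) (hz : z ∈ D)
    (hw : w ∈ D) : etaD D z ≤ etaD D w + diam D * dist z w := by
  have hz' := two_mul_infDist_frontier_le_diam hD hbdd hz
  have hw' := two_mul_infDist_frontier_le_diam hD hbdd hw
  have hzw : |deltaD D z - deltaD D w| ≤ dist z w := by
    simpa [deltaD, ← Real.dist_eq] using (lipschitz_infDist_pt (frontier D)).dist_le_mul z w
  calc etaD D z ≤ etaD D w + diam D * |deltaD D z - deltaD D w| :=
        mul_sub_le_mul_sub_add_mul_abs_sub infDist_nonneg infDist_nonneg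
          (by unfold deltaD; linarith [infDist_nonneg (x := z) (s := frontier D)])
          (by unfold deltaD; linarith [infDist_nonneg (x := w) (s := frontier D)])
    _ ≤ etaD D w + diam D * dist z w := by gcongr

end Eta

theorem log_one_add_integral_div_le {g h : ℝ → ℝ} {a b c : ℝ} (hab : a ≤ b) (hc : 0 < c)
    (hg : ContinuousOn g (Icc a b)) (hg₀ : ∀ t ∈ Icc a b, 0 ≤ g t)
    (hh : ContinuousOn h (Icc a b)) (hh₀ : ∀ t ∈ Icc a b, 0 < h t)
    (hhg : ∀ t ∈ Icc a b, h t ≤ c + ∫ u in a..t, g u) :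
    Real.log (1 + (∫ t in a..b, g t) / c) ≤ ∫ t in a..b, g t / h t := by
  set S : ℝ → ℝ := fun t => c + ∫ u in a..t, g u
  have hgi : ∀ t ∈ Icc a b, IntervalIntegrable g volume a t := fun t ht =>
    (hg.mono (Icc_subset_Icc_right ht.2)).intervalIntegrable_of_Icc ht.1
  have hS₀ : ∀ t ∈ Icc a b, 0 < S t := fun t ht =>
    add_pos_of_pos_of_nonneg hc <| intervalIntegral.integral_nonneg ht.1 fun u hu =>
      hg₀ u ⟨hu.1, hu.2.trans ht.2⟩
  have hSc : ContinuousOn S (Icc a b) := by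
    refine continuousOn_const.add ?_
    simpa [uIcc_of_le hab] using intervalIntegral.continuousOn_primitive_interval
      (hg.mono (uIcc_subset_Icc ⟨le_rfl, hab⟩ ⟨hab, le_rfl⟩)).integrableOn_Icc
  have hSd : ∀ t ∈ Ioo a b, HasDerivAt S (g t) t := fun t ht =>
    (intervalIntegral.integral_hasDerivAt_right (hgi t (Ioo_subset_Icc_self ht))
      ((hg.mono Ioo_subset_Icc_self).stronglyMeasurableAtFilter isOpen_Ioo t ht)
      (hg.continuousAt (Icc_mem_nhds ht.1 ht.2))).const_add c
  have hgS : IntervalIntegrable (fun t => g t / S t) volume a b :=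
    (hg.div hSc fun t ht => (hS₀ t ht).ne').intervalIntegrable_of_Icc hab
  have hftc : ∫ t in a..b, g t / S t = Real.log (S b) - Real.log (S a) :=
    intervalIntegral.integral_eq_sub_of_hasDeriv_right_of_le hab
      (hSc.log fun t ht => (hS₀ t ht).ne')
      (fun t ht => ((hSd t ht).log (hS₀ t (Ioo_subset_Icc_self ht)).ne').hasDerivWithinAt) hgS
  calc Real.log (1 + (∫ t in a..b, g t) / c) = Real.log (S b) - Real.log (S a) := by
        rw [← Real.log_div (hS₀ b ⟨hab, le_rfl⟩).ne' (hS₀ a ⟨le_rfl, hab⟩).ne']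
        simp only [S, intervalIntegral.integral_same, add_zero]
        field_simp
    _ = ∫ t in a..b, g t / S t := hftc.symm
    _ ≤ ∫ t in a..b, g t / h t :=
        intervalIntegral.integral_mono_on hab hgS
          ((hg.div hh fun t ht => (hh₀ t ht).ne').intervalIntegrable_of_Icc hab)
          fun t ht => div_le_div_of_nonneg_left (hg₀ t ht) (hh₀ t ht) (hhg t ht)

section C1Path

variable {E : Type*} [NormedAddCommGroup E] [NormedSpace ℝ E] {D : Set E} {x y z : E}

def C1JoinedIn (D : Set E) (x y : E) : Prop :=
  ∃ γ : ℝ → E, ContDiffOn ℝ 1 γ (Icc 0 1) ∧ γ 0 = x ∧ γ 1 = y ∧ ∀ t ∈ Icc (0 : ℝ) 1, γ t ∈ D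

theorem C1JoinedIn.refl (hx : x ∈ D) : C1JoinedIn D x x :=
  ⟨fun _ => x, contDiffOn_const, rfl, rfl, fun _ _ => hx⟩

theorem C1JoinedIn.trans_segment (h : C1JoinedIn D x y) (hyz : segment ℝ y z ⊆ D) :
    C1JoinedIn D x z := by
  obtain ⟨γ, hγ, rfl, rfl, hγD⟩ := h
  have hφ : ∀ s, Real.smoothTransition s ∈ Icc (0 : ℝ) 1 := fun s =>
    ⟨Real.smoothTransition.nonneg s, Real.smoothTransition.le_one s⟩
  -- first run through `γ`, then along the segment, each leg reparametrized to be flat at its ends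
  refine ⟨fun t => γ (Real.smoothTransition (2 * t)) +
    Real.smoothTransition (2 * t - 1) • (z - γ 1), ?_, ?_, ?_, ?_⟩
  · have hout : ContDiff ℝ 1 fun t : ℝ => Real.smoothTransition (2 * t) := by fun_prop
    exact (hγ.comp hout.contDiffOn fun t _ => hφ _).add
      (by fun_prop : ContDiff ℝ 1 fun t : ℝ => _).contDiffOn
  · simp [Real.smoothTransition.zero_of_nonpos]
  · norm_num [Real.smoothTransition.one_of_one_le]
  · intro t _
    dsimp only
    rcases le_total (2 * t) 1 with h | h
    · rw [Real.smoothTransition.zero_of_nonpos (by linarith : 2 * t - 1 ≤ 0), zero_smul,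
        add_zero]
      exact hγD _ (hφ _)
    · rw [Real.smoothTransition.one_of_one_le h]
      exact hyz (segment_eq_image' ℝ (γ 1) z ▸ mem_image_of_mem _ (hφ _))

theorem C1JoinedIn.right_mem (h : C1JoinedIn D x y) : y ∈ D := by
  obtain ⟨γ, -, -, rfl, hγD⟩ := h
  exact hγD 1 ⟨zero_le_one, le_rfl⟩

theorem IsOpen.c1JoinedIn (hD : IsOpen D) (hconn : IsPreconnected D) (hx : x ∈ D)
    (hy : y ∈ D) : C1JoinedIn D x y := by
  have hball := Metric.isOpen_iff.1 hD
  have hopen : IsOpen {y | C1JoinedIn D x y} := Metric.isOpen_iff.2 fun w hw => by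
    obtain ⟨r, hr, hrD⟩ := hball w hw.right_mem
    exact ⟨r, hr, fun v hv =>
      hw.trans_segment (((convex_ball w r).segment_subset (mem_ball_self hr) hv).trans hrD)⟩
  refine hconn.subset_of_closure_inter_subset hopen ⟨x, hx, .refl hx⟩ ?_ hy
  rintro w ⟨hwc, hwD⟩
  obtain ⟨r, hr, hrD⟩ := hball w hwD
  obtain ⟨v, hv, hvw⟩ := Metric.mem_closure_iff.1 hwc r hr
  exact hv.trans_segment
    (((convex_ball w r).segment_subset (mem_ball'.2 hvw) (mem_ball_self hr)).trans hrD)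

end C1Path

section PathLength

variable {n : ℕ} {D : Set (EuclideanSpace ℝ (Fin n))} {γ : ℝ → EuclideanSpace ℝ (Fin n)}

theorem mLength_comp_one_sub (D : Set (EuclideanSpace ℝ (Fin n)))
    (γ : ℝ → EuclideanSpace ℝ (Fin n)) : mLength D (fun t => γ (1 - t)) = mLength D γ := by
  simp only [mLength, deriv_comp_const_sub, norm_neg]
  simpa using intervalIntegral.integral_comp_sub_left
    (fun t => diam D / etaD D (γ t) * ‖deriv γ t‖) (a := 0) (b := 1) 1

theorem log_one_add_le_mLength (hD : IsOpen D) (hD' : D ≠ univ) (hbdd : IsBounded D)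
    (hγ : ContDiffOn ℝ 1 γ (Icc 0 1)) (hγD : ∀ t ∈ Icc (0 : ℝ) 1, γ t ∈ D) :
    Real.log (1 + diam D * dist (γ 0) (γ 1) / etaD D (γ 0)) ≤ mLength D γ := by
  have h₀ : (0 : ℝ) ∈ Icc (0 : ℝ) 1 := left_mem_Icc.2 zero_le_one
  set γ' := derivWithin γ (Icc 0 1)
  have hγ' : ContinuousOn γ' (Icc 0 1) :=
    hγ.continuousOn_derivWithin (uniqueDiffOn_Icc zero_lt_one) le_rfl
  have hderiv : EqOn (deriv γ) γ' (Ioo 0 1) := fun t ht =>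
    (derivWithin_of_mem_nhds (Icc_mem_nhds ht.1 ht.2)).symm
  have hdisp : ∀ t ∈ Icc (0 : ℝ) 1, dist (γ 0) (γ t) ≤ ∫ u in 0..t, ‖γ' u‖ := fun t ht => by
    have hsub : Icc 0 t ⊆ Icc (0 : ℝ) 1 := Icc_subset_Icc_right ht.2
    rw [dist_comm, dist_eq_norm]
    refine norm_sub_le_integral_of_norm_deriv_le_of_le ht.1 (hγ.continuousOn.mono hsub)
      ((hγ.differentiableOn one_ne_zero).mono (Ioo_subset_Icc_self.trans hsub))
      (.of_forall fun u hu => by rw [hderiv ⟨hu.1, hu.2.trans_le ht.2⟩])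
      ((hγ'.norm.mono hsub).intervalIntegrable_of_Icc ht.1)
  have hη : ∀ t ∈ Icc (0 : ℝ) 1,
      etaD D (γ t) ≤ etaD D (γ 0) + ∫ u in 0..t, diam D * ‖γ' u‖ := fun t ht => by
    rw [intervalIntegral.integral_const_mul]
    calc etaD D (γ t) ≤ etaD D (γ 0) + diam D * dist (γ 0) (γ t) := by
          simpa [dist_comm] using etaD_le_etaD_add_diam_mul_dist hD hbdd (hγD t ht) (hγD 0 h₀)
      _ ≤ _ := by gcongr; exact hdisp t ht
  have hlen : mLength D γ = ∫ t in 0..1, diam D * ‖γ' t‖ / etaD D (γ t) :=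
    intervalIntegral.integral_congr_Ioo_of_le zero_le_one fun t ht => by
      simp only [hderiv ht]
      ring
  have hη₀ : 0 < etaD D (γ 0) := etaD_pos hD hD' hbdd (hγD 0 h₀)
  calc Real.log (1 + diam D * dist (γ 0) (γ 1) / etaD D (γ 0))
      ≤ Real.log (1 + (∫ t in 0..1, diam D * ‖γ' t‖) / etaD D (γ 0)) := by
        rw [intervalIntegral.integral_const_mul]
        gcongr
        exact hdisp 1 (right_mem_Icc.2 zero_le_one)
    _ ≤ ∫ t in 0..1, diam D * ‖γ' t‖ / etaD D (γ t) :=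
        log_one_add_integral_div_le zero_le_one hη₀ (continuousOn_const.mul hγ'.norm)
          (fun _ _ => by positivity) ((continuous_etaD D).comp_continuousOn hγ.continuousOn)
          (fun t ht => etaD_pos hD hD' hbdd (hγD t ht)) hη
    _ = mLength D γ := hlen.symm

theorem zetaD_le_mLength (hD : IsOpen D) (hD' : D ≠ univ) (hbdd : IsBounded D)
    (hγ : ContDiffOn ℝ 1 γ (Icc 0 1)) (hγD : ∀ t ∈ Icc (0 : ℝ) 1, γ t ∈ D) :
    zetaD D (γ 0) (γ 1) ≤ mLength D γ := by
  rcases min_cases (etaD D (γ 0)) (etaD D (γ 1)) with ⟨h, -⟩ | ⟨h, -⟩ <;> rw [zetaD, h]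
  · exact log_one_add_le_mLength hD hD' hbdd hγ hγD
  · have hrev : MapsTo (fun t : ℝ => 1 - t) (Icc 0 1) (Icc 0 1) := fun t ht =>
      ⟨by linarith [ht.2], by linarith [ht.1]⟩
    simpa [dist_comm, Function.comp_def, mLength_comp_one_sub] using
      log_one_add_le_mLength hD hD' hbdd (hγ.comp (contDiffOn_const.sub contDiffOn_id) hrev)
        fun t ht => hγD _ (hrev ht)

end PathLength

theorem stmt_16_general {n : ℕ} (D : Set (EuclideanSpace ℝ (Fin n)))
    (hopen : IsOpen D) (hconn : IsConnected D) (hproper : D ≠ Set.univ)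
    (hbdd : Bornology.IsBounded D)
    (x y : EuclideanSpace ℝ (Fin n)) (hx : x ∈ D) (hy : y ∈ D) :
    zetaD D x y ≤ mDist D x y := by
  obtain ⟨γ, hγ, hγ₀, hγ₁, hγD⟩ := hopen.c1JoinedIn hconn.isPreconnected hx hy
  refine le_csInf ⟨_, γ, hγ, hγ₀, hγ₁, hγD, rfl⟩ ?_
  rintro L ⟨γ, hγ, rfl, rfl, hγD, rfl⟩
  exact zetaD_le_mLength hopen hproper hbdd hγ hγD

theorem stmt_16 {n : ℕ} (hn : 2 ≤ n) (D : Set (EuclideanSpace ℝ (Fin n)))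
    (hopen : IsOpen D) (hconn : IsConnected D) (hproper : D ≠ Set.univ)
    (hbdd : Bornology.IsBounded D)
    (x y : EuclideanSpace ℝ (Fin n)) (hx : x ∈ D) (hy : y ∈ D) :
    zetaD D x y ≤ mDist D x y :=
  stmt_16_general D hopen hconn hproper hbdd x y hx hy
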